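/- (Partial q-difference equation in x for 2D q-Euler polynomials.) For every n ≥ 1: Σ_{k=1}^{n} (q^{n−k}/[k]_q!) (α_k^E + [k]_q β_{k−1}^E y) D_{q,x}^{k} E_{n,q}(x,y) + q^{n} x · D_{q,x} E_{n,q}(x,y) − [n]_q · E_{n,q}(qx,y) = 0, where E_{n,q}(qx,y) denotes the polynomial obtained from E_{n,q}(x,y) by substituting qx for x. -/

import Mathlib

noncomputable section

open Finset MvPolynomial

/-- The `q`-integer `[n]_q = 1 + q + ⋯ + q^(n-1)`. -/
def qInt {K : Type*} [Field K] (q : K) (n : ℕ) : K := ∑ i ∈ Finset.range n, q ^ i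

/-- The `q`-factorial `[n]_q! = [1]_q [2]_q ⋯ [n]_q`. -/
def qFact {K : Type*} [Field K] (q : K) (n : ℕ) : K := ∏ k ∈ Finset.range n, qInt q (k + 1)

/-- The `q`-binomial coefficient `[n choose k]_q`. -/
def qChoose {K : Type*} [Field K] (q : K) (n k : ℕ) : K :=
  qFact q n / (qFact q k * qFact q (n - k))

/-- The partial `q`-derivative in the variable `v` (v = 0 is `x`, v = 1 is `y`),
the linear operator determined by `D_{q,x}(x^m y^l) = [m]_q x^(m-1) y^l` and
`D_{q,y}(x^m y^l) = [l]_q x^m y^(l-1)`. -/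
def qDeriv {K : Type*} [Field K] (q : K) (v : Fin 2) (P : MvPolynomial (Fin 2) K) :
    MvPolynomial (Fin 2) K :=
  ∑ m ∈ P.support, monomial (m - Finsupp.single v 1) (P.coeff m * qInt q (m v))

/-- Substitution `x ↦ c·x` in a polynomial in the two variables `x = X 0`, `y = X 1`. -/
def substX {K : Type*} [Field K] (c : K) (P : MvPolynomial (Fin 2) K) :
    MvPolynomial (Fin 2) K :=
  aeval (fun i : Fin 2 => if i = 0 then C c * X 0 else X 1) P

/-- Substitution `y ↦ c·y` in a polynomial in the two variables `x = X 0`, `y = X 1`. -/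
def substY {K : Type*} [Field K] (c : K) (P : MvPolynomial (Fin 2) K) :
    MvPolynomial (Fin 2) K :=
  aeval (fun i : Fin 2 => if i = 0 then X 0 else C c * X 1) P

/-- The 2D `q`-Appell polynomials attached to a coefficient sequence `a`:
`A_{n,q}(x,y) = Σ_{i+j+k=n} ([n]_q!/([i]_q![j]_q![k]_q!)) a_i q^(k(k-1)/2) x^j y^k`. -/
def appell {K : Type*} [Field K] (q : K) (a : ℕ → K) (n : ℕ) : MvPolynomial (Fin 2) K :=
  ∑ i ∈ Finset.range (n + 1), ∑ j ∈ Finset.range (n + 1 - i),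
    monomial (Finsupp.single (0 : Fin 2) j + Finsupp.single (1 : Fin 2) (n - i - j))
      (qFact q n / (qFact q i * qFact q j * qFact q (n - i - j)) * a i *
        q ^ ((n - i - j) * (n - i - j - 1) / 2))


/-!
Let `F(t) = Σ Eₙ tⁿ/[n]_q!` and `e(t) = Σ tⁿ/[n]_q!` (`qEGF q E` and `qEGF q 1`). The
recurrence for the `q`-Euler numbers says `F (1 + e) = 2`, and `e(qt) = (1 + (q-1)t) e(t)`;
together they give `2 (F(t) - F(qt)) = (q-1) t e(t) F(t) F(qt)`. The generating functions of
`α^E` and `β^E` are `A = -t e F / 2` and `B = 1 + (q-1) t e F / 2`, hence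
`(q-1) A(t) F(qt) = F(qt) - F(t)` and `B(t) F(qt) = F(t)`.

The coefficient of `x^a y^b` in `E_{n,q}(x,y)` is
`[n]_q! q^(b(b-1)/2)/([a]_q! [b]_q!) · E_s/[s]_q!` with `s = n - a - b`, and `D_{q,x}` shifts
`a` to `a + 1`. Comparing coefficients of `x^a y^b`, the two convolution identities above reduce
the equation to `q^(a+b) [s]_q + q^a [b]_q + q^(a+b+s) [a]_q = q^a [a+b+s]_q`.
-/

section QCalculus

variable {K : Type*} [Field K] (q : K)

@[simp]
lemma qInt_zero : qInt q 0 = 0 := by simp [qInt]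

lemma qInt_add (m n : ℕ) : qInt q (m + n) = qInt q m + q ^ m * qInt q n := by
  simp only [qInt, Finset.sum_range_add, pow_add, Finset.mul_sum]

lemma qInt_add_add (a b s : ℕ) :
    q ^ (a + b) * qInt q s + q ^ a * qInt q b + q ^ (a + b + s) * qInt q a
      = q ^ a * qInt q (a + b + s) := by
  rw [show a + b + s = b + s + a by ring, qInt_add, qInt_add]
  ring

lemma qInt_mul_sub_one (n : ℕ) : qInt q n * (q - 1) = q ^ n - 1 := geom_sum_mul q n

@[simp]
lemma qFact_zero : qFact q 0 = 1 := by simp [qFact]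

lemma qFact_succ (n : ℕ) : qFact q (n + 1) = qFact q n * qInt q (n + 1) :=
  Finset.prod_range_succ _ n

variable {q}

lemma qFact_ne_zero (hq : ∀ n : ℕ, 1 ≤ n → qInt q n ≠ 0) (n : ℕ) : qFact q n ≠ 0 :=
  Finset.prod_ne_zero_iff.2 fun k _ => hq (k + 1) (Nat.le_add_left 1 k)

end QCalculus

section PowerSeriesLemmas

open PowerSeries

variable {R : Type*} [CommRing R]

lemma PowerSeries.coeff_mul_eq_sum_Icc {P : PowerSeries R} (hP : coeff 0 P = 0)
    (Q : PowerSeries R) (n : ℕ) :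
    coeff n (P * Q) = ∑ k ∈ Finset.Icc 1 n, coeff k P * coeff (n - k) Q := by
  rw [PowerSeries.coeff_mul, Finset.Nat.sum_antidiagonal_eq_sum_range_succ_mk,
    Finset.sum_range_succ', hP, zero_mul, add_zero, ← Finset.Ico_add_one_right_eq_Icc,
    Finset.sum_Ico_eq_sum_range, Nat.add_sub_cancel]
  exact Finset.sum_congr rfl fun k _ => by rw [add_comm 1 k]

lemma PowerSeries.coeff_X_pow_add_mul (P : PowerSeries R) {n k : ℕ} (hk : k ≤ n) (d : ℕ) :
    coeff n (PowerSeries.X ^ (d + k) * P) = coeff (n - k) (PowerSeries.X ^ d * P) := by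
  rw [pow_add, mul_comm (PowerSeries.X ^ d), mul_assoc, coeff_X_pow_mul', if_pos hk]

lemma PowerSeries.rescale_X_pow_mul (c : R) (d : ℕ) (P : PowerSeries R) :
    rescale c (PowerSeries.X ^ d * P)
      = PowerSeries.C (c ^ d) * PowerSeries.X ^ d * rescale c P := by
  rw [map_mul, map_pow, rescale_X, mul_pow, ← map_pow]

end PowerSeriesLemmas

section QExponentialGeneratingFunction

open PowerSeries

variable {K : Type*} [Field K] (q : K)

def qEGF (a : ℕ → K) : PowerSeries K := PowerSeries.mk fun n => a n / qFact q n

@[simp]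
lemma coeff_qEGF (a : ℕ → K) (n : ℕ) : coeff n (qEGF q a) = a n / qFact q n := coeff_mk _ _

variable {q}

lemma coeff_qEGF_mul (hq : ∀ n : ℕ, 1 ≤ n → qInt q n ≠ 0) (a b : ℕ → K) (n : ℕ) :
    coeff n (qEGF q a * qEGF q b)
      = (∑ k ∈ Finset.range (n + 1), qChoose q n k * a k * b (n - k)) / qFact q n := by
  rw [PowerSeries.coeff_mul, Finset.Nat.sum_antidiagonal_eq_sum_range_succ_mk, Finset.sum_div]
  refine Finset.sum_congr rfl fun k _ => ?_
  rw [coeff_qEGF, coeff_qEGF, qChoose]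
  field_simp [qFact_ne_zero hq]

lemma rescale_qEGF_one (hq : ∀ n : ℕ, 1 ≤ n → qInt q n ≠ 0) :
    rescale q (qEGF q 1) = (1 + PowerSeries.C (q - 1) * PowerSeries.X) * qEGF q 1 := by
  ext (_ | n)
  · simp [qEGF]
  · rw [add_mul, map_add, one_mul, mul_assoc, PowerSeries.coeff_C_mul, coeff_succ_X_mul,
      coeff_rescale, coeff_qEGF, coeff_qEGF, qFact_succ, Pi.one_apply, Pi.one_apply]
    have := qInt_mul_sub_one q (n + 1)
    field_simp [qFact_ne_zero hq n, hq (n + 1) (Nat.le_add_left 1 n)]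
    linear_combination -this

lemma coeff_qEGF_mul_qEGF_one (hq : ∀ n : ℕ, 1 ≤ n → qInt q n ≠ 0) (a : ℕ → K)
    (n : ℕ) :
    coeff n (qEGF q a * qEGF q 1) =
      (∑ k ∈ Finset.range (n + 1), qChoose q n k * a k) / qFact q n := by
  simp only [coeff_qEGF_mul hq, Pi.one_apply, mul_one]

end QExponentialGeneratingFunction

section QEulerGeneratingFunction

open PowerSeries

variable {K : Type*} [Field K] {q : K} (hq : ∀ n : ℕ, 1 ≤ n → qInt q n ≠ 0)
  {E : ℕ → K} (hE0 : E 0 = 1)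
  (hE : ∀ n : ℕ, 1 ≤ n → E n + ∑ k ∈ Finset.range (n + 1), qChoose q n k * E k = 0)

include hq hE0 hE in
lemma qEGF_mul_one_add_qEGF_one : qEGF q E * (1 + qEGF q 1) = 2 := by
  ext n
  rw [mul_add, mul_one, map_add, coeff_qEGF_mul_qEGF_one hq, coeff_qEGF, ← add_div,
    ← map_ofNat (PowerSeries.C (R := K)), PowerSeries.coeff_C]
  rcases n with _ | n
  · simp [qChoose, hE0]
    norm_num
  · rw [hE (n + 1) (Nat.le_add_left 1 n), zero_div, if_neg n.succ_ne_zero]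

variable [CharZero K]

lemma C_inv_two_mul_two : PowerSeries.C (2⁻¹ : K) * 2 = 1 := by
  rw [← map_ofNat (PowerSeries.C (R := K)), ← map_mul, inv_mul_cancel₀ two_ne_zero, map_one]

include hq hE0 hE in
lemma two_mul_sub_rescale_qEGF :
    2 * (qEGF q E - rescale q (qEGF q E)) =
      PowerSeries.C (q - 1) * PowerSeries.X * (qEGF q E * qEGF q 1) * rescale q (qEGF q E) := by
  set F := qEGF q E
  set e := qEGF q 1
  have hU : F * (1 + e) = 2 := qEGF_mul_one_add_qEGF_one hq hE0 hE
  have hV : rescale q F * (1 + rescale q e) = 2 := by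
    simpa only [map_mul, map_add, map_one, map_ofNat] using congrArg (rescale q) hU
  have hf : rescale q e = (1 + PowerSeries.C (q - 1) * PowerSeries.X) * e := rescale_qEGF_one hq
  have h2 : (2 : PowerSeries K) ≠ 0 := by
    rw [← map_ofNat (PowerSeries.C (R := K)), Ne, map_eq_zero_iff _ PowerSeries.C_injective]
    exact two_ne_zero
  have hne : (1 + e) * (1 + rescale q e) ≠ 0 :=
    mul_ne_zero (right_ne_zero_of_mul (hU ▸ h2)) (right_ne_zero_of_mul (hV ▸ h2))
  apply mul_right_cancel₀ hne
  linear_combination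
    (2 * (1 + rescale q e) -
        PowerSeries.C (q - 1) * PowerSeries.X * e * rescale q F * (1 + rescale q e)) * hU
      - 2 * (1 + e + PowerSeries.C (q - 1) * PowerSeries.X * e) * hV + 4 * hf

include hq hE0 hE in
lemma sum_qEulerAlpha_mul_coeff (hq1 : q ≠ 1) {α : ℕ → K}
    (hα : ∀ k : ℕ, 1 ≤ k →
      α k = -(qInt q k / 2) * ∑ j ∈ Finset.range k, qChoose q (k - 1) j * E j) (n d : ℕ) :
    ∑ k ∈ Finset.Icc 1 n, q ^ (n - k) / qFact q k * α k *
        coeff (n - k) (PowerSeries.X ^ d * qEGF q E)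
      = q ^ d * qInt q (n - d) * coeff n (PowerSeries.X ^ d * qEGF q E) := by
  set F := qEGF q E
  set A := -(PowerSeries.C (2⁻¹ : K) * PowerSeries.X * (F * qEGF q 1)) with hA_def
  have hA0 : coeff 0 A = 0 := by simp [A, mul_assoc]
  have hA : ∀ k ∈ Finset.Icc 1 n, q ^ (n - k) / qFact q k * α k *
      coeff (n - k) (PowerSeries.X ^ d * F)
        = coeff k A * coeff (n - k) (rescale q (PowerSeries.X ^ d * F)) := by
    intro k hk
    obtain ⟨j, rfl⟩ : ∃ j, k = j + 1 := ⟨k - 1, by grind⟩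
    rw [hA_def, map_neg, mul_assoc (PowerSeries.C _), PowerSeries.coeff_C_mul,
      coeff_succ_X_mul, coeff_qEGF_mul_qEGF_one hq, coeff_rescale,
      hα (j + 1) (Nat.le_add_left 1 j), qFact_succ, Nat.add_sub_cancel]
    field_simp [qFact_ne_zero hq j, hq (j + 1) (Nat.le_add_left 1 j)]
  have hAG : PowerSeries.C (q - 1) * (A * rescale q F) = rescale q F - F := by
    linear_combination PowerSeries.C (2⁻¹ : K) * two_mul_sub_rescale_qEGF hq hE0 hE
      + (rescale q F - F) * C_inv_two_mul_two (K := K)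
  rw [Finset.sum_congr rfl hA, ← coeff_mul_eq_sum_Icc hA0, rescale_X_pow_mul,
    show A * (PowerSeries.C (q ^ d) * PowerSeries.X ^ d * rescale q F)
      = PowerSeries.C (q ^ d) * (PowerSeries.X ^ d * (A * rescale q F)) by ring,
    PowerSeries.coeff_C_mul, mul_assoc (q ^ d)]
  congr 1
  apply mul_left_cancel₀ (sub_ne_zero.mpr hq1)
  rw [← PowerSeries.coeff_C_mul, mul_left_comm, hAG, coeff_X_pow_mul', coeff_X_pow_mul']
  split_ifs
  · rw [map_sub, coeff_rescale]
    linear_combination (-coeff (n - d) F) * qInt_mul_sub_one q (n - d)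
  · simp

include hq hE0 hE in
lemma sum_qEulerBeta_mul_coeff {β : ℕ → K} (hβ0 : β 0 = 1)
    (hβ : ∀ m : ℕ, 1 ≤ m →
      β m = ((q - 1) * qInt q m / 2) * ∑ j ∈ Finset.range m, qChoose q (m - 1) j * E j)
    (n d : ℕ) :
    ∑ k ∈ Finset.Icc 1 n, q ^ (n - k) / qFact q k * (qInt q k * β (k - 1)) *
        coeff (n - k) (PowerSeries.X ^ d * qEGF q E)
      = q ^ d * coeff n (PowerSeries.X ^ (d + 1) * qEGF q E) := by
  set F := qEGF q E
  set B := 1 + PowerSeries.C (2⁻¹ : K) * PowerSeries.C (q - 1) * PowerSeries.X * (F * qEGF q 1)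
    with hB_def
  have hB : ∀ j, coeff j B = β j / qFact q j := by
    rintro (_ | j)
    · simp [hB_def, hβ0, mul_assoc]
    · rw [hB_def, map_add, PowerSeries.coeff_one, if_neg j.succ_ne_zero, zero_add, mul_assoc,
        mul_assoc (PowerSeries.C _), PowerSeries.coeff_C_mul, PowerSeries.coeff_C_mul,
        coeff_succ_X_mul, coeff_qEGF_mul_qEGF_one hq, hβ (j + 1) (Nat.le_add_left 1 j),
        qFact_succ, Nat.add_sub_cancel]
      field_simp [qFact_ne_zero hq j, hq (j + 1) (Nat.le_add_left 1 j)]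
  have hXB : ∀ k ∈ Finset.Icc 1 n, q ^ (n - k) / qFact q k * (qInt q k * β (k - 1)) *
      coeff (n - k) (PowerSeries.X ^ d * F)
        = coeff k (PowerSeries.X * B) * coeff (n - k) (rescale q (PowerSeries.X ^ d * F)) := by
    intro k hk
    obtain ⟨j, rfl⟩ : ∃ j, k = j + 1 := ⟨k - 1, by grind⟩
    rw [coeff_succ_X_mul, hB, coeff_rescale, qFact_succ, Nat.add_sub_cancel]
    field_simp [qFact_ne_zero hq j, hq (j + 1) (Nat.le_add_left 1 j)]
  have hBG : B * rescale q F = F := by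
    linear_combination (-PowerSeries.C (2⁻¹ : K)) * two_mul_sub_rescale_qEGF hq hE0 hE
      + (F - rescale q F) * C_inv_two_mul_two (K := K)
  rw [Finset.sum_congr rfl hXB, ← coeff_mul_eq_sum_Icc (by simp), rescale_X_pow_mul,
    show PowerSeries.X * B * (PowerSeries.C (q ^ d) * PowerSeries.X ^ d * rescale q F)
      = PowerSeries.C (q ^ d) * (PowerSeries.X ^ (d + 1) * (B * rescale q F)) by ring,
    PowerSeries.coeff_C_mul, hBG]

end QEulerGeneratingFunction

section PolynomialsInTwoVariables

lemma single_zero_add_single_one_eq_iff {j l a b : ℕ} :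
    Finsupp.single (0 : Fin 2) j + Finsupp.single 1 l
        = Finsupp.single (0 : Fin 2) a + Finsupp.single 1 b ↔ j = a ∧ l = b :=
  ⟨fun h => ⟨by simpa using DFunLike.congr_fun h 0, by simpa using DFunLike.congr_fun h 1⟩,
    fun ⟨hj, hl⟩ => hj ▸ hl ▸ rfl⟩

lemma exists_eq_single_zero_add_single_one (m : Fin 2 →₀ ℕ) :
    ∃ a b : ℕ, m = Finsupp.single 0 a + Finsupp.single 1 b :=
  ⟨m 0, m 1, by ext i; fin_cases i <;> simp⟩

variable {R : Type*} [CommSemiring R]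

lemma coeff_C_mul_C_add_C_mul_X_mul {σ : Type*} (c α β : R) (i : σ) (P : MvPolynomial σ R)
    (m : σ →₀ ℕ) :
    coeff m (C c * (C α + C β * X i) * P) = c * α * coeff m P + c * β * coeff m (X i * P) := by
  rw [mul_assoc, coeff_C_mul, add_mul, coeff_add, coeff_C_mul, mul_assoc, coeff_C_mul]
  ring

lemma coeff_X_one_mul_single_add_one (P : MvPolynomial (Fin 2) R) (a b : ℕ) :
    coeff (Finsupp.single 0 a + Finsupp.single 1 (b + 1)) (X 1 * P)
      = coeff (Finsupp.single 0 a + Finsupp.single 1 b) P := by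
  rw [add_comm b 1, Finsupp.single_add, add_left_comm, coeff_X_mul]

end PolynomialsInTwoVariables

section Substitution

variable {K : Type*} [Field K]

lemma substX_monomial (c : K) (μ : Fin 2 →₀ ℕ) (r : K) :
    substX c (monomial μ r) = monomial μ (c ^ μ 0 * r) := by
  rw [substX, aeval_monomial, Finsupp.prod_fintype _ _ fun _ => pow_zero _, Fin.prod_univ_two,
    if_pos rfl, if_neg one_ne_zero, algebraMap_eq, mul_pow, ← map_pow, monomial_eq,
    Finsupp.prod_fintype _ _ fun _ => pow_zero _, Fin.prod_univ_two, map_mul]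
  ring

lemma coeff_substX (c : K) (P : MvPolynomial (Fin 2) K) (m : Fin 2 →₀ ℕ) :
    coeff m (substX c P) = c ^ m 0 * coeff m P := by
  induction P using MvPolynomial.induction_on' with
  | monomial μ r =>
    rw [substX_monomial, coeff_monomial, coeff_monomial]
    split_ifs with h
    · rw [h]
    · rw [mul_zero]
  | add P Q hP hQ =>
    simp only [substX, map_add, coeff_add] at hP hQ ⊢
    rw [hP, hQ, mul_add]

end Substitution

section QDerivative

variable {K : Type*} [Field K] (q : K)

lemma coeff_qDeriv (v : Fin 2) (P : MvPolynomial (Fin 2) K) (m : Fin 2 →₀ ℕ) :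
    coeff m (qDeriv q v P) = qInt q (m v + 1) * coeff (m + Finsupp.single v 1) P := by
  have hterm : ∀ μ : Fin 2 →₀ ℕ,
      (if μ - Finsupp.single v 1 = m then coeff μ P * qInt q (μ v) else 0)
        = if m + Finsupp.single v 1 = μ then coeff μ P * qInt q (μ v) else 0 := by
    intro μ
    rcases Nat.eq_zero_or_pos (μ v) with hμ | hμ
    · simp [hμ]
    · have hle : Finsupp.single v 1 ≤ μ := Finsupp.single_le_iff.mpr hμ
      simp_rw [tsub_eq_iff_eq_add_of_le hle, @eq_comm _ μ]
  simp only [qDeriv, coeff_sum, coeff_monomial, hterm, Finset.sum_ite_eq, mem_support_iff]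
  split_ifs with h
  · simp [mul_comm]
  · rw [notMem_support_iff.mp h, mul_zero]

lemma coeff_X_mul_qDeriv (v : Fin 2) (P : MvPolynomial (Fin 2) K) (m : Fin 2 →₀ ℕ) :
    coeff m (X v * qDeriv q v P) = qInt q (m v) * coeff m P := by
  classical
  rw [coeff_X_mul']
  split_ifs with h
  · have hle : Finsupp.single v 1 ≤ m := Finsupp.single_le_iff.mpr (Nat.pos_of_ne_zero
      (Finsupp.mem_support_iff.mp h))
    rw [coeff_qDeriv, tsub_add_cancel_of_le hle, Finsupp.tsub_apply, Finsupp.single_eq_same,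
      Nat.sub_add_cancel (Finsupp.single_le_iff.mp hle)]
  · rw [Finsupp.notMem_support_iff.mp h, qInt_zero, zero_mul]

end QDerivative

section Appell

variable {K : Type*} [Field K] (q : K)

def appellWeight (a b : ℕ) : K := q ^ (b * (b - 1) / 2) / (qFact q a * qFact q b)

lemma coeff_appell (c : ℕ → K) (n a b : ℕ) :
    coeff (Finsupp.single 0 a + Finsupp.single 1 b) (appell q c n)
      = qFact q n * appellWeight q a b *
          PowerSeries.coeff n (PowerSeries.X ^ (a + b) * qEGF q c) := by
  simp only [appell, coeff_sum, coeff_monomial, single_zero_add_single_one_eq_iff,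
    PowerSeries.coeff_X_pow_mul', coeff_qEGF]
  split_ifs with h
  · obtain ⟨s, rfl⟩ := Nat.exists_eq_add_of_le h
    rw [Finset.sum_eq_single s, Finset.sum_eq_single a]
    · rw [if_pos ⟨rfl, by omega⟩, appellWeight, show a + b + s - s - a = b by omega,
        show a + b + s - (a + b) = s by omega]
      ring
    · intro j _ hj
      exact if_neg fun h => hj h.1
    · intro ha
      simp at ha
    · intro i _ hi
      refine Finset.sum_eq_zero fun j hj => if_neg ?_
      simp only [Finset.mem_range] at hj
      omega
    · intro hs
      simp at hs
  · rw [mul_zero]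
    refine Finset.sum_eq_zero fun i hi => Finset.sum_eq_zero fun j hj => if_neg ?_
    simp only [Finset.mem_range] at hi hj
    omega

variable {q}

lemma qInt_mul_appellWeight_succ (hq : ∀ n : ℕ, 1 ≤ n → qInt q n ≠ 0) (a b : ℕ) :
    qInt q (a + 1) * appellWeight q (a + 1) b = appellWeight q a b := by
  rw [appellWeight, appellWeight, qFact_succ]
  field_simp [qFact_ne_zero hq, hq (a + 1) (Nat.le_add_left 1 a)]

lemma appellWeight_mul_pow (hq : ∀ n : ℕ, 1 ≤ n → qInt q n ≠ 0) (a b : ℕ) :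
    appellWeight q a b * q ^ b = qInt q (b + 1) * appellWeight q a (b + 1) := by
  rw [appellWeight, appellWeight, Nat.triangle_succ, pow_add, qFact_succ]
  field_simp [qFact_ne_zero hq, hq (b + 1) (Nat.le_add_left 1 b)]

lemma coeff_iterate_qDeriv_appell (hq : ∀ n : ℕ, 1 ≤ n → qInt q n ≠ 0) (c : ℕ → K)
    (n k a b : ℕ) :
    coeff (Finsupp.single 0 a + Finsupp.single 1 b) ((qDeriv q 0)^[k] (appell q c n))
      = qFact q n * appellWeight q a b *
          PowerSeries.coeff n (PowerSeries.X ^ (a + b + k) * qEGF q c) := by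
  induction k generalizing a with
  | zero => exact coeff_appell q c n a b
  | succ k ih =>
    rw [Function.iterate_succ_apply', coeff_qDeriv, add_right_comm, ← Finsupp.single_add, ih,
      ← qInt_mul_appellWeight_succ hq a b, Finsupp.add_apply, Finsupp.single_eq_same,
      Finsupp.single_eq_of_ne zero_ne_one, add_zero, show a + 1 + b + k = a + b + (k + 1) by ring]
    ring

end Appell

section QEulerAppell

variable {K : Type*} [Field K] [CharZero K] {q : K} (hq : ∀ n : ℕ, 1 ≤ n → qInt q n ≠ 0)
  {E : ℕ → K} (hE0 : E 0 = 1)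
  (hE : ∀ n : ℕ, 1 ≤ n → E n + ∑ k ∈ Finset.range (n + 1), qChoose q n k * E k = 0)

include hq hE0 hE in
lemma sum_qEulerAlpha_mul_coeff_iterate_qDeriv (hq1 : q ≠ 1) {α : ℕ → K}
    (hα : ∀ k : ℕ, 1 ≤ k →
      α k = -(qInt q k / 2) * ∑ j ∈ Finset.range k, qChoose q (k - 1) j * E j) (n a b : ℕ) :
    ∑ k ∈ Finset.Icc 1 n, q ^ (n - k) / qFact q k * α k *
        coeff (Finsupp.single 0 a + Finsupp.single 1 b) ((qDeriv q 0)^[k] (appell q E n))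
      = qFact q n * appellWeight q a b *
          (q ^ (a + b) * qInt q (n - (a + b)) *
            PowerSeries.coeff n (PowerSeries.X ^ (a + b) * qEGF q E)) := by
  rw [← sum_qEulerAlpha_mul_coeff hq hE0 hE hq1 hα, Finset.mul_sum]
  refine Finset.sum_congr rfl fun k hk => ?_
  rw [coeff_iterate_qDeriv_appell hq,
    PowerSeries.coeff_X_pow_add_mul _ (Finset.mem_Icc.mp hk).2]
  ring

include hq hE0 hE in
lemma sum_qEulerBeta_mul_coeff_X_mul_iterate_qDeriv {β : ℕ → K} (hβ0 : β 0 = 1)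
    (hβ : ∀ m : ℕ, 1 ≤ m →
      β m = ((q - 1) * qInt q m / 2) * ∑ j ∈ Finset.range m, qChoose q (m - 1) j * E j)
    (n a b : ℕ) :
    ∑ k ∈ Finset.Icc 1 n, q ^ (n - k) / qFact q k * (qInt q k * β (k - 1)) *
        coeff (Finsupp.single 0 a + Finsupp.single 1 b) (X 1 * (qDeriv q 0)^[k] (appell q E n))
      = qFact q n * appellWeight q a b *
          (q ^ a * qInt q b * PowerSeries.coeff n (PowerSeries.X ^ (a + b) * qEGF q E)) := by
  rcases b with _ | b
  · refine (Finset.sum_eq_zero fun k _ => ?_).trans (by simp)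
    rw [coeff_X_mul', if_neg (by simp), mul_zero]
  · calc _ = qFact q n * appellWeight q a b *
            (q ^ (a + b) * PowerSeries.coeff n (PowerSeries.X ^ (a + b + 1) * qEGF q E)) := by
          rw [← sum_qEulerBeta_mul_coeff hq hE0 hE hβ0 hβ, Finset.mul_sum]
          refine Finset.sum_congr rfl fun k hk => ?_
          rw [coeff_X_one_mul_single_add_one, coeff_iterate_qDeriv_appell hq,
            PowerSeries.coeff_X_pow_add_mul _ (Finset.mem_Icc.mp hk).2]
          ring
      _ = _ := by
          rw [← add_assoc]
          linear_combination (qFact q n * q ^ a * PowerSeries.coeff n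
            (PowerSeries.X ^ (a + b + 1) * qEGF q E)) * appellWeight_mul_pow hq a b

end QEulerAppell

theorem qEuler2D_qDifference_x_general
    {K : Type*} [Field K] [CharZero K] (q : K) (hq1 : q ≠ 1)
    (hq : ∀ n : ℕ, 1 ≤ n → qInt q n ≠ 0)
    (E : ℕ → K) (hE0 : E 0 = 1)
    (hE : ∀ n : ℕ, 1 ≤ n → E n + ∑ k ∈ Finset.range (n + 1), qChoose q n k * E k = 0)
    (αE βE : ℕ → K)
    (hαE : ∀ k : ℕ, 1 ≤ k →
      αE k = -(qInt q k / 2) * ∑ j ∈ Finset.range k, qChoose q (k - 1) j * E j)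
    (hβE0 : βE 0 = 1)
    (hβE : ∀ m : ℕ, 1 ≤ m →
      βE m = ((q - 1) * qInt q m / 2) * ∑ j ∈ Finset.range m, qChoose q (m - 1) j * E j)
    (n : ℕ) :
    (∑ k ∈ Finset.Icc 1 n, C (q ^ (n - k) / qFact q k) *
        (C (αE k) + C (qInt q k * βE (k - 1)) * X 1) * (qDeriv q 0)^[k] (appell q E n)) +
      C (q ^ n) * X 0 * qDeriv q 0 (appell q E n) -
      C (qInt q n) * substX q (appell q E n) = 0 := by
  ext m
  obtain ⟨a, b, rfl⟩ := exists_eq_single_zero_add_single_one m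
  simp only [coeff_sub, coeff_add, coeff_sum, coeff_C_mul_C_add_C_mul_X_mul,
    Finset.sum_add_distrib, mul_assoc (C (q ^ n)), coeff_C_mul, coeff_X_mul_qDeriv,
    coeff_substX, coeff_zero]
  rw [sum_qEulerAlpha_mul_coeff_iterate_qDeriv hq hE0 hE hq1 hαE,
    sum_qEulerBeta_mul_coeff_X_mul_iterate_qDeriv hq hE0 hE hβE0 hβE, coeff_appell]
  simp only [Finsupp.add_apply, Finsupp.single_eq_same, Finsupp.single_eq_of_ne zero_ne_one,
    add_zero]
  rcases le_or_gt (a + b) n with h | h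
  · obtain ⟨s, rfl⟩ := Nat.exists_eq_add_of_le h
    rw [Nat.add_sub_cancel_left]
    linear_combination (qFact q (a + b + s) * appellWeight q a b *
      PowerSeries.coeff (a + b + s) (PowerSeries.X ^ (a + b) * qEGF q E)) * qInt_add_add q a b s
  · rw [PowerSeries.coeff_X_pow_mul', if_neg h.not_ge]
    ring

/-- Partial `q`-difference equation in `x` for 2D `q`-Euler polynomials. -/
theorem qEuler2D_qDifference_x
    {K : Type*} [Field K] [CharZero K] (q : K) (hq0 : q ≠ 0) (hq1 : q ≠ 1)
    (hq : ∀ n : ℕ, 1 ≤ n → qInt q n ≠ 0)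
    (E : ℕ → K) (hE0 : E 0 = 1)
    (hE : ∀ n : ℕ, 1 ≤ n → E n + ∑ k ∈ Finset.range (n + 1), qChoose q n k * E k = 0)
    (αE βE : ℕ → K)
    (hαE : ∀ k : ℕ, 1 ≤ k →
      αE k = -(qInt q k / 2) * ∑ j ∈ Finset.range k, qChoose q (k - 1) j * E j)
    (hβE0 : βE 0 = 1)
    (hβE : ∀ m : ℕ, 1 ≤ m →
      βE m = ((q - 1) * qInt q m / 2) * ∑ j ∈ Finset.range m, qChoose q (m - 1) j * E j)
    (n : ℕ) (hn : 1 ≤ n) :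
    (∑ k ∈ Finset.Icc 1 n, C (q ^ (n - k) / qFact q k) *
        (C (αE k) + C (qInt q k * βE (k - 1)) * X 1) * (qDeriv q 0)^[k] (appell q E n)) +
      C (q ^ n) * X 0 * qDeriv q 0 (appell q E n) -
      C (qInt q n) * substX q (appell q E n) = 0 :=
  qEuler2D_qDifference_x_general q hq1 hq E hE0 hE αE βE hαE hβE0 hβE n
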